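/- arXiv:1902.02076 — 4 statements merged into one kernel-verified Lean document; each statement's English description precedes it below -/
import Mathlib

section
/- Let g be the map from the previous context and define f : (ℤ/2ℤ)^(ℤ²) → ((ℤ/2ℤ)²)^(ℤ²) by applying g to every row: f(x)(i,j) = g(row_j(x))(i), where row_j(x)(i) = x(i,j). Then f is injective and continuous, and commutes with both horizontal and vertical shifts. -/
/-!
The second coordinate of `g x i` is `x (i + 1)` (in `ZMod 2`, `if a = 0 then 0 else 1` is `a`), so
each row of `x` is read off from `f x` shifted by one column. Each coordinate of `f x` depends
only on two coordinates of `x`, which gives continuity, and `f` is defined by the same local rule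
at every site, which gives shift commutation.
-/

def g (x : ℤ → ZMod 2) : ℤ → ZMod 2 × ZMod 2 :=
  fun i => if x (i + 1) = 0 then (x i, 0) else (0, 1)

/-- `f` applies `g` to every row. -/
def f (x : (ℤ × ℤ) → ZMod 2) : (ℤ × ℤ) → ZMod 2 × ZMod 2 :=
  fun p => g (fun i => x (i, p.2)) p.1

def blockRule (a b : ZMod 2) : ZMod 2 × ZMod 2 :=
  if b = 0 then (a, 0) else (0, 1)

theorem blockRule_snd (a b : ZMod 2) : (blockRule a b).2 = b := by
  fin_cases b <;> rfl

theorem f_apply (x : (ℤ × ℤ) → ZMod 2) (i j : ℤ) :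
    f x (i, j) = blockRule (x (i, j)) (x (i + 1, j)) :=
  rfl

theorem f_apply_sub_one_snd (x : (ℤ × ℤ) → ZMod 2) (i j : ℤ) : (f x (i - 1, j)).2 = x (i, j) := by
  rw [f_apply, blockRule_snd, sub_add_cancel]

theorem f_injective : Function.Injective f := fun x y hxy =>
  funext fun ⟨i, j⟩ => by
    rw [← f_apply_sub_one_snd x, ← f_apply_sub_one_snd y, hxy]

theorem continuous_f : Continuous f := by
  apply continuous_pi
  rintro ⟨i, j⟩
  simp only [f_apply]
  exact (continuous_of_discreteTopology (f := fun q : ZMod 2 × ZMod 2 => blockRule q.1 q.2)).comp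
    (by fun_prop : Continuous fun x : (ℤ × ℤ) → ZMod 2 => (x (i, j), x (i + 1, j)))

theorem f_comp_add_right (x : (ℤ × ℤ) → ZMod 2) (u : ℤ × ℤ) :
    f (fun v => x (v + u)) = fun v => f x (v + u) :=
  funext fun ⟨i, j⟩ => by
    obtain ⟨a, b⟩ := u
    simp only [f_apply, Prod.mk_add_mk, add_right_comm i 1 a]

/-- The row-wise skewing map `f` is injective, continuous, and commutes with the
horizontal and vertical shifts. -/
theorem f_injective_continuous_shift_commuting :
    Function.Injective f ∧ Continuous f ∧
      (∀ x : (ℤ × ℤ) → ZMod 2, ∀ u : ℤ × ℤ,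
        f (fun v => x (v + u)) = fun v => f x (v + u)) :=
  ⟨f_injective, continuous_f, f_comp_add_right⟩
end

section
/- There exist two distinct configurations x, y in the Ledrappier subshift X such that x(i,j) = y(i,j) for all (i,j) with j ≥ 0, but x ≠ y. Hence the upper half-plane {(a,b) : b ≥ 0} is not expansive (does not code ℤ²) for X. -/
def Ledrappier : Set ((ℤ × ℤ) → ZMod 2) :=
  {x | ∀ v : ℤ × ℤ, x v + x (v + (1, 0)) + x (v + (0, 1)) = 0}

/-- Periodicity of binomial coefficients mod 2. -/
lemma choose_period (m a k : ℕ) (hk : k < 2 ^ m) :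
    ((a + 2 ^ m).choose k : ZMod 2) = (a.choose k : ZMod 2) := by
  rw [Nat.add_comm, Nat.add_choose_eq]
  push_cast
  rw [Finset.sum_eq_single (0, k)]
  · simp
  · rintro ⟨i, j⟩ hij hne
    rw [Finset.HasAntidiagonal.mem_antidiagonal] at hij
    have hi : i ≠ 0 := by
      rintro rfl
      simp only [Nat.zero_add] at hij
      subst hij
      exact hne rfl
    have hip : i ≠ 2 ^ m := by rintro rfl; omega
    have : ((2 ^ m).choose i : ZMod 2) = 0 :=
      (ZMod.natCast_eq_zero_iff _ _).2
        (Nat.Prime.dvd_choose_pow Nat.prime_two hi hip)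
    rw [this, zero_mul]
  · intro h
    exact absurd (by simp [Finset.HasAntidiagonal.mem_antidiagonal]) h

lemma choose_pow_sub_one (m k : ℕ) (hk : k < 2 ^ m) :
    ((2 ^ m - 1).choose k : ZMod 2) = 1 := by
  induction k with
  | zero => simp
  | succ k ih =>
    have h2 : 2 ^ m = (2 ^ m - 1) + 1 := by omega
    have hP : (2 ^ m).choose (k + 1) = (2 ^ m - 1).choose k + (2 ^ m - 1).choose (k + 1) := by
      rw [h2]
      exact Nat.choose_succ_succ' _ _
    have h0 : ((2 ^ m).choose (k + 1) : ZMod 2) = 0 :=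
      (ZMod.natCast_eq_zero_iff _ _).2
        (Nat.Prime.dvd_choose_pow Nat.prime_two (by omega) (by omega))
    have := congrArg (Nat.cast : ℕ → ZMod 2) hP
    push_cast at this
    rw [h0, ih (by omega)] at this
    revert this
    generalize ((2 ^ m - 1).choose (k + 1) : ZMod 2) = c
    revert c; decide

/-- the configuration row function: `f k i = C(i mod 2^(k+1), k)` mod 2 -/
noncomputable def Lf (k : ℕ) (i : ℤ) : ZMod 2 :=
  ((Int.toNat (i % 2 ^ (k + 1))).choose k : ZMod 2)

lemma Lf_rec (k : ℕ) (i : ℤ) : Lf (k + 1) i + Lf (k + 1) (i + 1) = Lf k i := by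
  have hN : (0:ℤ) < 2 ^ (k + 2) := by positivity
  set a : ℕ := (i % 2 ^ (k + 2)).toNat with ha
  have hia : i % 2 ^ (k + 2) = (a : ℤ) :=
    (Int.toNat_of_nonneg (Int.emod_nonneg i (by positivity))).symm
  have halt : a < 2 ^ (k + 2) := by
    have h1 : (a : ℤ) < 2 ^ (k + 2) := hia ▸ Int.emod_lt_of_pos i hN
    exact_mod_cast h1
  have hdvd : (2 ^ (k + 1) : ℤ) ∣ 2 ^ (k + 2) := pow_dvd_pow 2 (by omega)
  have hcast : ((a : ℤ) % 2 ^ (k + 1)).toNat = a % 2 ^ (k + 1) := by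
    rw [show ((2:ℤ) ^ (k + 1)) = ((2 ^ (k + 1) : ℕ) : ℤ) from by push_cast; ring,
      ← Int.natCast_mod, Int.toNat_natCast]
  have hsm : (i % 2 ^ (k + 1)).toNat = a % 2 ^ (k + 1) := by
    rw [show i % 2 ^ (k + 1) = (a : ℤ) % 2 ^ (k + 1) from by
      rw [← hia, Int.emod_emod_of_dvd i hdvd], hcast]
  have hpow2 : 2 ^ (k + 2) = 2 ^ (k + 1) + 2 ^ (k + 1) := by ring
  have hLfk : Lf k i = (((a % 2 ^ (k + 1)).choose k : ℕ) : ZMod 2) := by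
    rw [Lf, hsm]
  have hmodval : ((a % 2 ^ (k + 1)).choose k : ZMod 2) = (a.choose k : ZMod 2) := by
    rcases lt_or_ge a (2 ^ (k + 1)) with h | h
    · rw [Nat.mod_eq_of_lt h]
    · have haa : a % 2 ^ (k + 1) + 2 ^ (k + 1) = a := by
        rw [Nat.mod_eq_sub_mod h, Nat.mod_eq_of_lt (by omega)]
        omega
      conv_rhs => rw [← haa]
      rw [choose_period (k + 1) _ k (by
        calc k < 2 ^ k := Nat.lt_two_pow_self (n := k)
        _ ≤ 2 ^ (k + 1) := Nat.pow_le_pow_right (by norm_num) (by omega))]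
  have hLf1 : Lf (k + 1) i = (a.choose (k + 1) : ZMod 2) := rfl
  have hdecomp : i + 1 = ((a : ℤ) + 1) + 2 ^ (k + 2) * (i / 2 ^ (k + 2)) := by
    have := Int.mul_ediv_add_emod i (2 ^ (k + 2))
    rw [hia] at this
    omega
  have hmod1 : (i + 1) % 2 ^ (k + 2) = ((a : ℤ) + 1) % 2 ^ (k + 2) := by
    rw [hdecomp, Int.add_mul_emod_self_left]
  rcases lt_or_ge (a + 1) (2 ^ (k + 2)) with hc | hc
  · have hi1 : (i + 1) % 2 ^ (k + 2) = ((a + 1 : ℕ) : ℤ) := by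
      rw [hmod1, Int.emod_eq_of_lt (by positivity) (by exact_mod_cast hc)]
      push_cast; ring
    have hLf2 : Lf (k + 1) (i + 1) = ((a + 1).choose (k + 1) : ZMod 2) := by
      rw [Lf, hi1, Int.toNat_natCast]
    rw [hLf1, hLf2, hLfk, hmodval, Nat.choose_succ_succ']
    push_cast
    generalize (a.choose (k + 1) : ZMod 2) = c
    generalize (a.choose k : ZMod 2) = d
    revert c d; decide
  · have haeq : a = 2 ^ (k + 2) - 1 := by omega
    have hi1 : (i + 1) % 2 ^ (k + 2) = 0 := by
      rw [hmod1, show (a : ℤ) + 1 = 2 ^ (k + 2) from by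
        rw [haeq]; push_cast [Nat.one_le_two_pow]; ring, Int.emod_self]
    have hLf2 : Lf (k + 1) (i + 1) = 0 := by
      rw [Lf, hi1]
      simp [Nat.choose_eq_zero_of_lt]
    have hmod2 : a % 2 ^ (k + 1) = 2 ^ (k + 1) - 1 := by
      have h1 : a = 2 ^ (k + 1) + (2 ^ (k + 1) - 1) := by omega
      rw [h1, Nat.add_mod_left, Nat.mod_eq_of_lt (by omega)]
    rw [hLf1, hLf2, hLfk, hmod2, haeq,
      choose_pow_sub_one (k + 2) (k + 1) (by
        calc k + 1 < 2 ^ (k + 1) := Nat.lt_two_pow_self (n := k + 1)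
        _ ≤ 2 ^ (k + 2) := Nat.pow_le_pow_right (by norm_num) (by omega)),
      choose_pow_sub_one (k + 1) k (Nat.lt_two_pow_self (n := _) |>.trans_le
        (Nat.pow_le_pow_right (by norm_num) (by omega)))]
    decide

/-- There are two distinct configurations of the Ledrappier subshift agreeing on the
upper half-plane `{(a,b) : b ≥ 0}`; hence this half-plane is not expansive. -/
theorem ledrappier_upper_half_plane_not_expansive :
    ∃ x ∈ Ledrappier, ∃ y ∈ Ledrappier,
      (∀ p : ℤ × ℤ, 0 ≤ p.2 → x p = y p) ∧ x ≠ y := by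
  classical
  set y : (ℤ × ℤ) → ZMod 2 :=
    fun p => if p.2 < 0 then Lf (-1 - p.2).toNat p.1 else 0 with hy
  have hself : ∀ c : ZMod 2, c + c = 0 := by decide
  refine ⟨fun _ => 0, ?_, y, ?_, ?_, ?_⟩
  · intro v; simp
  · rintro ⟨i, j⟩
    show y (i, j) + y ((i, j) + (1, 0)) + y ((i, j) + (0, 1)) = 0
    have e1 : (i, j) + ((1 : ℤ), (0 : ℤ)) = (i + 1, j) := by
      simp [Prod.ext_iff]
    have e2 : (i, j) + ((0 : ℤ), (1 : ℤ)) = (i, j + 1) := by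
      simp [Prod.ext_iff]
    rw [e1, e2]
    rcases lt_or_ge j 0 with hj | hj
    · rcases eq_or_lt_of_le (by omega : j ≤ -1) with hj1 | hj2
      · subst hj1
        simp only [hy]
        norm_num
        have h0 : ∀ z : ℤ, Lf 0 z = 1 := by
          intro z
          simp [Lf]
        simp only [h0]
        decide
      · have hj2' : j ≤ -2 := by omega
        obtain ⟨k, hk⟩ : ∃ k : ℕ, (-1 - j).toNat = k + 1 := ⟨(-1 - j).toNat - 1, by omega⟩
        have hk' : (-1 - (j + 1)).toNat = k := by omega
        simp only [hy]
        rw [if_pos (by omega : (i + 1, j).2 < 0), if_pos (by omega : ((i : ℤ), j).2 < 0),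
          if_pos (by omega : ((i : ℤ), j + 1).2 < 0)]
        simp only [hk, hk']
        rw [Lf_rec k i]
        exact hself _
    · simp only [hy]
      rw [if_neg (by omega : ¬ ((i : ℤ), j).2 < 0), if_neg (by omega : ¬ (i + 1, j).2 < 0),
        if_neg (by omega : ¬ ((i : ℤ), j + 1).2 < 0)]
      simp
  · intro p hp
    simp only [hy]
    rw [if_neg (by omega)]
  · intro h
    have := congrFun h ((0 : ℤ), (-1 : ℤ))
    simp only [hy] at this
    norm_num at this
    have h0 : Lf 0 (0 : ℤ) = 1 := by simp [Lf]
    rw [h0] at this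
    exact absurd this (by decide)
end

section
/- The Ledrappier subshift X is right-closing in the left direction (−1,0): the half-plane {(a,b) ∈ ℤ² : a > 0} together with the column {(0,b) : b < 0} codes the column {(0,b) : b ∈ ℤ}. Concretely, if x, y ∈ X agree on {(a,b) : a ≥ 1} ∪ {(0,b) : b < 0}, then x = y on {(a,b) : a ≥ 0}. -/
/-! Over `ZMod 2` the local rule reads `x (a, b + 1) = x (a, b) + x (a + 1, b)`, so agreement at
`(0, -1)` and on column `1` propagates up column `0` by induction on `b`. -/

namespace Ledrappier

variable {x y : (ℤ × ℤ) → ZMod 2}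

theorem add_add_eq_zero (hx : x ∈ Ledrappier) (a b : ℤ) :
    x (a, b) + x (a + 1, b) + x (a, b + 1) = 0 := by
  simpa only [Prod.mk_add_mk, add_zero, zero_add] using hx (a, b)

theorem eq_up_of_eq_of_eq_right (hx : x ∈ Ledrappier) (hy : y ∈ Ledrappier) {a b : ℤ}
    (h : x (a, b) = y (a, b)) (hr : x (a + 1, b) = y (a + 1, b)) :
    x (a, b + 1) = y (a, b + 1) := by
  linear_combination add_add_eq_zero hx a b - add_add_eq_zero hy a b - h - hr

theorem eq_on_column_of_eq_on_right (hx : x ∈ Ledrappier) (hy : y ∈ Ledrappier) {a b₀ : ℤ}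
    (h : x (a, b₀) = y (a, b₀)) (hr : ∀ b, b₀ ≤ b → x (a + 1, b) = y (a + 1, b)) :
    ∀ b, b₀ ≤ b → x (a, b) = y (a, b) := by
  intro b hb
  induction b, hb using Int.leInduction with
  | base => exact h
  | succ b hb ih => exact eq_up_of_eq_of_eq_right hx hy ih (hr b hb)

end Ledrappier

/-- The Ledrappier subshift is right-closing in the left direction: if two configurations
agree on `{(a,b) : a ≥ 1} ∪ {(0,b) : b < 0}` then they agree on `{(a,b) : a ≥ 0}`. -/
theorem ledrappier_right_closing_left :
    ∀ x ∈ Ledrappier, ∀ y ∈ Ledrappier,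
      (∀ p : ℤ × ℤ, (1 ≤ p.1 ∨ (p.1 = 0 ∧ p.2 < 0)) → x p = y p) →
      ∀ p : ℤ × ℤ, 0 ≤ p.1 → x p = y p := by
  rintro x hx y hy hagree ⟨a, b⟩ (ha : 0 ≤ a)
  obtain ha | rfl := ha.lt_or_eq'
  · exact hagree _ (Or.inl ha)
  obtain hb | hb := lt_or_ge b 0
  · exact hagree _ (Or.inr ⟨rfl, hb⟩)
  exact Ledrappier.eq_on_column_of_eq_on_right hx hy (b₀ := -1)
    (hagree _ (Or.inr ⟨rfl, by norm_num⟩)) (fun b _ ↦ hagree _ (Or.inl (by norm_num))) b (by omega)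
end

section
/- Failure of polygonality is witnessed by Y: the subshift Y = f(X), conjugate image of the Ledrappier subshift under the row-wise skewing map f, admits no extremally permutive shape. (It suffices to show: if Y admitted an extremally permutive shape, then Y would be bi-closing in every direction, contradicting that Y is not closing in direction (−1,0).) -/
def emb (p : ℤ × ℤ) : ℝ × ℝ := ((p.1 : ℝ), (p.2 : ℝ))

/-! ### Binomial coefficients mod 2 -/

def C2 (n k : ℕ) : ZMod 2 := (n.choose k : ZMod 2)

lemma C2_pascal (n k : ℕ) : C2 (n + 1) (k + 1) = C2 n k + C2 n (k + 1) := by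
  unfold C2
  rw [Nat.choose_succ_succ]
  push_cast
  ring

lemma C2_self (n : ℕ) : C2 n n = 1 := by simp [C2]

lemma C2_zero_right (n : ℕ) : C2 n 0 = 1 := by simp [C2]

lemma C2_zero_lt (k : ℕ) (hk : 0 < k) : C2 0 k = 0 := by
  unfold C2
  rw [Nat.choose_eq_zero_of_lt hk]
  simp

lemma zmod2_add_self (a : ZMod 2) : a + a = 0 := by
  have h2 : (2 : ZMod 2) = 0 := rfl
  calc a + a = 2 * a := by ring
  _ = 0 := by rw [h2]; ring

/-! ### The two fundamental Ledrappier configurations -/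

/-- Ledrappier configuration supported in `{a ≤ 0}` whose column `0` is all ones. -/
def G : ℤ × ℤ → ZMod 2 := fun p =>
  if 0 < p.1 then 0
  else if 0 ≤ p.2 then C2 p.2.toNat (-p.1).toNat
  else C2 (-p.2 - 1 - p.1).toNat (-p.2 - 1).toNat

/-- Ledrappier configuration whose column `1` is the single cell `(1, -1)`. -/
def F : ℤ × ℤ → ZMod 2 := fun p =>
  if 0 ≤ p.2 then (if 0 < p.1 then 0 else C2 p.2.toNat (-p.1).toNat)
  else (if p.1 ≤ 0 then 0 else C2 (p.1 - 1).toNat (-p.2 - 1).toNat)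

lemma G_pos {a b : ℤ} (h : 0 < a) : G (a, b) = 0 := by simp [G, h]

lemma G_col0 (b : ℤ) : G (0, b) = 1 := by
  unfold G
  by_cases hb : 0 ≤ b
  · simp [hb, C2_zero_right]
  · have h : (-b - 1 - 0 : ℤ) = -b - 1 := by ring
    simp [hb, h, C2_self]

lemma F_col1 (c : ℤ) : F (1, c) = if c = -1 then 1 else 0 := by
  unfold F
  by_cases hc : 0 ≤ c
  · have h : ¬ (c = -1) := by omega
    simp [hc, h]
  · simp only [if_neg hc]
    have h1 : ¬ ((1 : ℤ) ≤ 0) := by omega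
    simp only [if_neg h1]
    by_cases hc1 : c = -1
    · subst hc1; norm_num [C2_zero_right]
    · have hk : 0 < (-c - 1).toNat := by omega
      have h0 : ((1 : ℤ) - 1).toNat = 0 := by norm_num
      rw [h0, C2_zero_lt _ hk, if_neg hc1]

lemma G_mem : G ∈ Ledrappier := by
  intro v
  obtain ⟨a, b⟩ := v
  show G (a, b) + G ((a, b) + (1, 0)) + G ((a, b) + (0, 1)) = 0
  have e1 : ((a, b) + ((1 : ℤ), (0 : ℤ))) = (a + 1, b) := by
    rw [Prod.mk_add_mk]; norm_num
  have e2 : ((a, b) + ((0 : ℤ), (1 : ℤ))) = (a, b + 1) := by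
    rw [Prod.mk_add_mk]; norm_num
  rw [e1, e2]
  rcases lt_trichotomy 0 a with ha | ha | ha
  · rw [G_pos ha, G_pos (by omega), G_pos ha]; simp
  · rw [← ha]
    rw [G_col0, G_pos (by omega), G_col0]
    simpa using zmod2_add_self 1
  · -- a ≤ -1
    unfold G
    simp only
    rw [if_neg (by omega : ¬ (0:ℤ) < a), if_neg (by omega : ¬ (0:ℤ) < a + 1),
      if_neg (by omega : ¬ (0:ℤ) < a)]
    by_cases hb : 0 ≤ b
    · rw [if_pos hb, if_pos hb, if_pos (by omega : (0:ℤ) ≤ b + 1)]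
      have h1 : (-a).toNat = (-(a+1)).toNat + 1 := by omega
      have h2 : (b + 1).toNat = b.toNat + 1 := by omega
      rw [h1, h2, C2_pascal]
      generalize C2 b.toNat ((-(a+1)).toNat) = X
      generalize C2 b.toNat ((-(a+1)).toNat + 1) = Y
      calc Y + X + (X + Y) = (X + X) + (Y + Y) := by ring
      _ = 0 := by rw [zmod2_add_self, zmod2_add_self]; simp
    · by_cases hbe : b = -1
      · rw [if_neg hb, if_neg hb, if_pos (by omega : (0:ℤ) ≤ b + 1)]
        have h1 : (-b - 1 - a).toNat = (-a).toNat := by omega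
        have h2 : (-b - 1 - (a+1)).toNat = (-(a+1)).toNat := by omega
        have h3 : (-b - 1).toNat = 0 := by omega
        have h4 : (b+1).toNat = 0 := by omega
        rw [h1, h2, h3, h4, C2_zero_right, C2_zero_right,
          C2_zero_lt _ (by omega : 0 < (-a).toNat)]
        simpa using zmod2_add_self 1
      · -- b ≤ -2
        rw [if_neg hb, if_neg hb, if_neg (by omega : ¬ (0:ℤ) ≤ b + 1)]
        have h1 : (-b - 1 - a).toNat = (-b - 1 - (a+1)).toNat + 1 := by omega
        have h2 : (-b - 1).toNat = (-(b+1) - 1).toNat + 1 := by omega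
        have h3 : (-(b+1) - 1 - a).toNat = (-b - 1 - (a+1)).toNat := by omega
        rw [h1, h2, h3, C2_pascal]
        generalize C2 ((-b - 1 - (a+1)).toNat) ((-(b+1) - 1).toNat) = X
        generalize C2 ((-b - 1 - (a+1)).toNat) ((-(b+1) - 1).toNat + 1) = Y
        calc X + Y + Y + X = (X + X) + (Y + Y) := by ring
        _ = 0 := by rw [zmod2_add_self, zmod2_add_self]; simp

lemma F_mem : F ∈ Ledrappier := by
  intro v
  obtain ⟨a, b⟩ := v
  show F (a, b) + F ((a, b) + (1, 0)) + F ((a, b) + (0, 1)) = 0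
  have e1 : ((a, b) + ((1 : ℤ), (0 : ℤ))) = (a + 1, b) := by
    rw [Prod.mk_add_mk]; norm_num
  have e2 : ((a, b) + ((0 : ℤ), (1 : ℤ))) = (a, b + 1) := by
    rw [Prod.mk_add_mk]; norm_num
  rw [e1, e2]
  unfold F
  simp only
  by_cases hb : 0 ≤ b
  · rw [if_pos hb, if_pos hb, if_pos (by omega : (0:ℤ) ≤ b + 1)]
    rcases lt_trichotomy 0 a with ha | ha | ha
    · rw [if_pos ha, if_pos (by omega : (0:ℤ) < a + 1), if_pos ha]; simp
    · rw [← ha]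
      rw [if_neg (by omega : ¬ (0:ℤ) < 0), if_pos (by omega : (0:ℤ) < 0 + 1),
        if_neg (by omega : ¬ (0:ℤ) < 0)]
      have hz : (-(0:ℤ)).toNat = 0 := by norm_num
      rw [hz, C2_zero_right, C2_zero_right]
      simpa using zmod2_add_self 1
    · rw [if_neg (by omega : ¬ (0:ℤ) < a), if_neg (by omega : ¬ (0:ℤ) < a + 1),
        if_neg (by omega : ¬ (0:ℤ) < a)]
      have h1 : (-a).toNat = (-(a+1)).toNat + 1 := by omega
      have h2 : (b + 1).toNat = b.toNat + 1 := by omega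
      rw [h1, h2, C2_pascal]
      generalize C2 b.toNat ((-(a+1)).toNat) = X
      generalize C2 b.toNat ((-(a+1)).toNat + 1) = Y
      calc Y + X + (X + Y) = (X + X) + (Y + Y) := by ring
      _ = 0 := by rw [zmod2_add_self, zmod2_add_self]; simp
  · by_cases hbe : b = -1
    · rw [if_neg hb, if_neg hb, if_pos (by omega : (0:ℤ) ≤ b + 1)]
      have h4 : (b + 1).toNat = 0 := by omega
      have h3 : (-b - 1).toNat = 0 := by omega
      rcases lt_trichotomy 0 a with ha | ha | ha
      · rw [if_neg (by omega : ¬ a ≤ 0), if_neg (by omega : ¬ a + 1 ≤ 0),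
          if_pos ha, h3, C2_zero_right, C2_zero_right]
        simpa using zmod2_add_self 1
      · rw [← ha]
        rw [if_pos (by omega : (0:ℤ) ≤ 0), if_neg (by omega : ¬ (0:ℤ) + 1 ≤ 0),
          if_neg (by omega : ¬ (0:ℤ) < 0)]
        have h5 : ((0:ℤ) + 1 - 1).toNat = 0 := by norm_num
        have hz : (-(0:ℤ)).toNat = 0 := by norm_num
        rw [h5, h3, h4, hz]
        simp only [C2_zero_right]
        exact zmod2_add_self 1
      · rw [if_pos (by omega : a ≤ 0), if_pos (by omega : a + 1 ≤ 0),
          if_neg (by omega : ¬ (0:ℤ) < a), h4,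
          C2_zero_lt _ (by omega : 0 < (-a).toNat)]
        simp
    · -- b ≤ -2
      rw [if_neg hb, if_neg hb, if_neg (by omega : ¬ (0:ℤ) ≤ b + 1)]
      rcases lt_trichotomy 0 a with ha | ha | ha
      · rw [if_neg (by omega : ¬ a ≤ 0), if_neg (by omega : ¬ a + 1 ≤ 0),
          if_neg (by omega : ¬ a ≤ 0)]
        have h1 : (a + 1 - 1).toNat = (a - 1).toNat + 1 := by omega
        have h2 : (-b - 1).toNat = (-(b+1) - 1).toNat + 1 := by omega
        rw [h1, h2, C2_pascal]
        generalize C2 ((a-1).toNat) ((-(b+1) - 1).toNat) = X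
        generalize C2 ((a-1).toNat) ((-(b+1) - 1).toNat + 1) = Y
        calc Y + (X + Y) + X = (X + X) + (Y + Y) := by ring
        _ = 0 := by rw [zmod2_add_self, zmod2_add_self]; simp
      · rw [← ha]
        rw [if_pos (by omega : (0:ℤ) ≤ 0), if_neg (by omega : ¬ (0:ℤ) + 1 ≤ 0),
          if_pos (by omega : (0:ℤ) ≤ 0)]
        have h5 : ((0:ℤ) + 1 - 1).toNat = 0 := by norm_num
        rw [h5, C2_zero_lt _ (by omega : 0 < (-b - 1).toNat)]
        simp
      · rw [if_pos (by omega : a ≤ 0), if_pos (by omega : a + 1 ≤ 0),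
          if_pos (by omega : a ≤ 0)]
        simp

/-! ### Closure properties of `Ledrappier` -/

lemma Ledrappier.translate {c : (ℤ × ℤ) → ZMod 2} (hc : c ∈ Ledrappier) (w : ℤ × ℤ) :
    (fun v => c (v - w)) ∈ Ledrappier := by
  intro v
  have h := hc (v - w)
  have e1 : v + (1, 0) - w = v - w + (1, 0) := by abel
  have e2 : v + (0, 1) - w = v - w + (0, 1) := by abel
  simp only [e1, e2]
  exact h

lemma Ledrappier.add {c d : (ℤ × ℤ) → ZMod 2} (hc : c ∈ Ledrappier) (hd : d ∈ Ledrappier) :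
    (fun v => c v + d v) ∈ Ledrappier := by
  intro v
  have h1 := hc v
  have h2 := hd v
  calc c v + d v + (c (v + (1,0)) + d (v + (1,0))) + (c (v + (0,1)) + d (v + (0,1)))
      = (c v + c (v + (1,0)) + c (v + (0,1))) + (d v + d (v + (1,0)) + d (v + (0,1))) := by ring
  _ = 0 := by rw [h1, h2]; simp

lemma Ledrappier.sum {ι : Type*} (s : Finset ι) (c : ι → (ℤ × ℤ) → ZMod 2)
    (hc : ∀ i ∈ s, c i ∈ Ledrappier) : (fun v => ∑ i ∈ s, c i v) ∈ Ledrappier := by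
  intro v
  rw [← Finset.sum_add_distrib, ← Finset.sum_add_distrib]
  exact Finset.sum_eq_zero fun i hi => hc i hi v

/-! ### Extreme points of hulls of finite sets from strict linear maximization -/

lemma extreme_of_strict_max (s : Finset (ℝ × ℝ)) (u : ℝ × ℝ) (hu : u ∈ s)
    (L : (ℝ × ℝ) →ₗ[ℝ] ℝ) (h : ∀ p ∈ s, p ≠ u → L p < L u) :
    u ∈ Set.extremePoints ℝ (convexHull ℝ (s : Set (ℝ × ℝ))) := by
  have hbound : ∀ z ∈ convexHull ℝ (s : Set (ℝ × ℝ)), L z ≤ L u := by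
    intro z hz
    have hsub : convexHull ℝ (s : Set (ℝ × ℝ)) ⊆ {w | L w ≤ L u} := by
      apply convexHull_min
      · intro p hp
        simp only [Set.mem_setOf_eq]
        rcases eq_or_ne p u with rfl | hne
        · exact le_refl (L p)
        · exact le_of_lt (h p hp hne)
      · intro p hp q hq a b ha hb hab
        simp only [Set.mem_setOf_eq] at hp hq ⊢
        have hL : L (a • p + b • q) = a * L p + b * L q := by
          rw [map_add, map_smul, map_smul, smul_eq_mul, smul_eq_mul]
        rw [hL]
        calc a * L p + b * L q ≤ a * L u + b * L u := by
              exact add_le_add (mul_le_mul_of_nonneg_left hp ha)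
                (mul_le_mul_of_nonneg_left hq hb)
        _ = L u := by rw [← add_mul, hab, one_mul]
    exact hsub hz
  have heq : ∀ z ∈ convexHull ℝ (s : Set (ℝ × ℝ)), L z = L u → z = u := by
    intro z hz hLz
    obtain ⟨w, hw0, hw1, hwz⟩ := Finset.mem_convexHull'.1 hz
    have hLsum : ∑ p ∈ s, w p * L p = L u := by
      have : L z = ∑ p ∈ s, w p * L p := by
        rw [← hwz, map_sum]
        exact Finset.sum_congr rfl fun p _ => by rw [map_smul, smul_eq_mul]
      rw [← this, hLz]
    have hzero : ∑ p ∈ s, w p * (L u - L p) = 0 := by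
      have expand : ∑ p ∈ s, w p * (L u - L p)
          = (∑ p ∈ s, w p) * L u - ∑ p ∈ s, w p * L p := by
        rw [Finset.sum_mul, ← Finset.sum_sub_distrib]
        exact Finset.sum_congr rfl fun p _ => by ring
      rw [expand, hw1, hLsum]; ring
    have hterm : ∀ p ∈ s, w p * (L u - L p) = 0 := by
      intro p hp
      refine (Finset.sum_eq_zero_iff_of_nonneg ?_).1 hzero p hp
      intro q hq
      rcases eq_or_ne q u with rfl | hne
      · simp
      · exact mul_nonneg (hw0 q hq) (sub_nonneg.2 (le_of_lt (h q hq hne)))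
    have hwz' : ∀ p ∈ s, p ≠ u → w p = 0 := by
      intro p hp hne
      have hpos : 0 < L u - L p := sub_pos.2 (h p hp hne)
      have := hterm p hp
      rcases mul_eq_zero.1 this with h0 | h0
      · exact h0
      · exact absurd h0 (ne_of_gt hpos)
    have hwu : w u = 1 := by
      rw [← hw1, Finset.sum_eq_single_of_mem u hu]
      intro b hb hne
      exact hwz' b hb hne
    have : z = w u • u := by
      rw [← hwz, Finset.sum_eq_single_of_mem u hu]
      intro b hb hne
      rw [hwz' b hb hne, zero_smul]
    rw [this, hwu, one_smul]
  refine ⟨subset_convexHull ℝ _ hu, ?_⟩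
  intro x hx y hy hseg
  obtain ⟨a, b, ha, hb, hab, habu⟩ := hseg
  have hLu : a * L x + b * L y = L u := by
    rw [← habu, map_add, map_smul, map_smul, smul_eq_mul, smul_eq_mul]
  have hLx : L x = L u := by
    by_contra hne
    have hlt : L x < L u := lt_of_le_of_ne (hbound x hx) hne
    have hle : L y ≤ L u := hbound y hy
    have h1 : a * L x < a * L u := mul_lt_mul_of_pos_left hlt ha
    have h2 : b * L y ≤ b * L u := mul_le_mul_of_nonneg_left hle hb.le
    have h3 : a * L u + b * L u = L u := by rw [← add_mul, hab, one_mul]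
    linarith
  have hLy : L y = L u := by
    by_contra hne
    have hlt : L y < L u := lt_of_le_of_ne (hbound y hy) hne
    have hle : L x ≤ L u := hbound x hx
    have h1 : b * L y < b * L u := mul_lt_mul_of_pos_left hlt hb
    have h2 : a * L x ≤ a * L u := mul_le_mul_of_nonneg_left hle ha.le
    have h3 : a * L u + b * L u = L u := by rw [← add_mul, hab, one_mul]
    linarith
  exact heq x hx hLx

/-! ### Main theorem -/

lemma f_apply_s19 (z : (ℤ × ℤ) → ZMod 2) (t : ℤ × ℤ) :
    f z t = if z (t.1 + 1, t.2) = 0 then (z (t.1, t.2), 0) else (0, 1) := rfl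

/-- The conjugate `Y = f(X)` of the Ledrappier subshift admits no extremally permutive
shape, i.e. `Y` is not polygonal. -/
theorem conjugate_not_polygonal :
    ¬ ∃ T : Finset (ℤ × ℤ), T.Nonempty ∧
      ∀ u ∈ T, emb u ∈ Set.extremePoints ℝ (convexHull ℝ (emb '' (T : Set (ℤ × ℤ)))) →
        ∀ x ∈ f '' Ledrappier, ∀ y ∈ f '' Ledrappier,
          (∀ t ∈ T, t ≠ u → x t = y t) → ∀ t ∈ T, x t = y t := by
  rintro ⟨T, hTne, H⟩
  -- the bottom-left (lexicographically minimal) point of T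
  have hfne : (T.image Prod.fst).Nonempty := hTne.image _
  obtain ⟨A0, hA0⟩ : ∃ a, a = (T.image Prod.fst).min' hfne := ⟨_, rfl⟩
  have hT1ne : (T.filter (fun t => t.1 = A0)).Nonempty := by
    obtain ⟨t, ht, hteq⟩ := Finset.mem_image.1 ((T.image Prod.fst).min'_mem hfne)
    exact ⟨t, Finset.mem_filter.2 ⟨ht, by rw [hA0, ← hteq]⟩⟩
  have hsne : ((T.filter (fun t => t.1 = A0)).image Prod.snd).Nonempty := hT1ne.image _
  obtain ⟨B0, hB0⟩ : ∃ b, b = ((T.filter (fun t => t.1 = A0)).image Prod.snd).min' hsne :=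
    ⟨_, rfl⟩
  have hu : ((A0, B0) : ℤ × ℤ) ∈ T := by
    have hmem := Finset.min'_mem _ hsne
    rw [← hB0] at hmem
    obtain ⟨t, ht, hteq⟩ := Finset.mem_image.1 hmem
    have ht' := Finset.mem_filter.1 ht
    have : t = (A0, B0) := Prod.ext ht'.2 hteq
    exact this ▸ ht'.1
  set u : ℤ × ℤ := (A0, B0) with hudef
  have hmin1 : ∀ t ∈ T, A0 ≤ t.1 := by
    intro t ht
    rw [hA0]
    exact Finset.min'_le _ _ (Finset.mem_image_of_mem _ ht)
  have hmin2 : ∀ t ∈ T, t.1 = A0 → B0 ≤ t.2 := by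
    intro t ht h1
    rw [hB0]
    exact Finset.min'_le _ _
      (Finset.mem_image_of_mem _ (Finset.mem_filter.2 ⟨ht, h1⟩))
  -- the rows of the other points of T in the column of u
  set B : Finset ℤ := (T.filter (fun t => t.1 = A0 ∧ t ≠ u)).image (fun t => t.2 - B0)
    with hBdef
  have hBpos : ∀ β ∈ B, 1 ≤ β := by
    intro β hβ
    obtain ⟨t, ht, rfl⟩ := Finset.mem_image.1 hβ
    obtain ⟨htT, ht1, htne⟩ := Finset.mem_filter.1 ht
    have h2 : B0 ≤ t.2 := hmin2 t htT ht1
    have h3 : t.2 ≠ B0 := fun hh => htne (Prod.ext ht1 hh)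
    omega
  have hBmem : ∀ t ∈ T, t ≠ u → t.1 = A0 → (t.2 - B0) ∈ B := by
    intro t ht htne h1
    exact Finset.mem_image_of_mem _ (Finset.mem_filter.2 ⟨ht, h1, htne⟩)
  -- the two configurations
  set xx : (ℤ × ℤ) → ZMod 2 :=
    fun v => ∑ β ∈ B, F (v - (u + (0, β + 1))) with hxxdef
  set yy : (ℤ × ℤ) → ZMod 2 := fun v => xx v + G (v - u) with hyydef
  have hxxL : xx ∈ Ledrappier :=
    Ledrappier.sum B (fun β => fun v => F (v - (u + (0, β + 1))))
      (fun β _ => Ledrappier.translate F_mem _)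
  have hyyL : yy ∈ Ledrappier :=
    Ledrappier.add hxxL (Ledrappier.translate G_mem u)
  -- value of `xx` on the column right of u
  have hsub : ∀ (c : ℤ) (β : ℤ), ((A0 + 1, c) : ℤ × ℤ) - (u + (0, β + 1))
      = (1, c - B0 - β - 1) := by
    intro c β
    rw [hudef]
    show ((A0 + 1, c) : ℤ × ℤ) - (A0 + 0, B0 + (β + 1)) = (1, c - B0 - β - 1)
    rw [Prod.mk_sub_mk]
    simp only [Prod.mk.injEq]
    omega
  have xcol : ∀ c : ℤ, xx (A0 + 1, c) = if (c - B0) ∈ B then 1 else 0 := by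
    intro c
    show (∑ β ∈ B, F (((A0 + 1, c) : ℤ × ℤ) - (u + (0, β + 1))))
      = if (c - B0) ∈ B then 1 else 0
    have hterm : ∀ β ∈ B, F (((A0 + 1, c) : ℤ × ℤ) - (u + (0, β + 1)))
        = if β = c - B0 then 1 else 0 := by
      intro β _
      rw [hsub c β, F_col1]
      by_cases hβ : β = c - B0
      · rw [if_pos (by omega : c - B0 - β - 1 = -1), if_pos hβ]
      · rw [if_neg (by omega : ¬ (c - B0 - β - 1 = -1)), if_neg hβ]
    rw [Finset.sum_congr rfl hterm]
    exact Finset.sum_ite_eq' B (c - B0) (fun _ => 1)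
  -- G values right of the column of u
  have hGright : ∀ (s c : ℤ), A0 < s → G ((s, c) - u) = 0 := by
    intro s c hs
    rw [hudef]
    show G ((s, c) - (A0, B0)) = 0
    rw [Prod.mk_sub_mk]
    exact G_pos (by omega)
  -- extreme point property of u
  obtain ⟨N, hN⟩ : ∃ n, n = 1 + T.sup' hTne (fun t => B0 - t.2) := ⟨_, rfl⟩
  have hNbig : ∀ t ∈ T, B0 - t.2 < N := by
    intro t ht
    have := Finset.le_sup' (fun t => B0 - t.2) ht
    omega
  have hN1 : 1 ≤ N := by
    have := Finset.le_sup' (fun t => B0 - t.2) hu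
    simp only [hudef] at this
    omega
  have hstrict : ∀ t ∈ T, t ≠ u → N * A0 + B0 < N * t.1 + t.2 := by
    intro t ht htne
    rcases eq_or_lt_of_le (hmin1 t ht) with heq | hlt
    · have h2 : B0 ≤ t.2 := hmin2 t ht heq.symm
      have h3 : t.2 ≠ B0 := fun hh => htne (Prod.ext heq.symm hh)
      have : N * t.1 = N * A0 := by rw [← heq]
      omega
    · have hmul : N ≤ N * (t.1 - A0) :=
        le_mul_of_one_le_right (by omega) (by omega)
      have hexp : N * t.1 + t.2 - (N * A0 + B0) = N * (t.1 - A0) + (t.2 - B0) := by ring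
      have hNb := hNbig t ht
      omega
  set L : (ℝ × ℝ) →ₗ[ℝ] ℝ :=
    { toFun := fun p => -((N : ℝ) * p.1 + p.2)
      map_add' := by intros; simp; ring
      map_smul' := by intros; simp; ring } with hLdef
  have hextreme : emb u ∈ Set.extremePoints ℝ (convexHull ℝ (emb '' (T : Set (ℤ × ℤ)))) := by
    have himg : emb '' (T : Set (ℤ × ℤ)) = ((T.image emb : Finset (ℝ × ℝ)) : Set (ℝ × ℝ)) :=
      (Finset.coe_image).symm
    rw [himg]
    apply extreme_of_strict_max _ _ (Finset.mem_image_of_mem emb hu) L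
    intro p hp hne
    obtain ⟨t, ht, rfl⟩ := Finset.mem_image.1 hp
    have htne : t ≠ u := by rintro rfl; exact hne rfl
    have hint := hstrict t ht htne
    have hreal : ((N * A0 + B0 : ℤ) : ℝ) < ((N * t.1 + t.2 : ℤ) : ℝ) := by exact_mod_cast hint
    show L (emb t) < L (emb u)
    rw [hLdef]
    simp only [emb, LinearMap.coe_mk, AddHom.coe_mk]
    push_cast at hreal ⊢
    show -((N : ℝ) * (t.1 : ℝ) + (t.2 : ℝ)) < -((N : ℝ) * (A0 : ℝ) + (B0 : ℝ))
    linarith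
  -- agreement away from u
  have hagree : ∀ t ∈ T, t ≠ u → f xx t = f yy t := by
    intro t ht htne
    rcases eq_or_lt_of_le (hmin1 t ht) with heq | hlt
    · -- t is in the column of u, strictly above
      have hBt : (t.2 - B0) ∈ B := hBmem t ht htne heq.symm
      have hx1 : xx (t.1 + 1, t.2) = 1 := by
        rw [← heq, xcol, if_pos hBt]
      have hy1 : yy (t.1 + 1, t.2) = 1 := by
        rw [hyydef]
        show xx (t.1 + 1, t.2) + G ((t.1 + 1, t.2) - u) = 1
        rw [hx1, hGright (t.1 + 1) t.2 (by omega), add_zero]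
      rw [f_apply_s19, f_apply_s19, hx1, hy1]
      norm_num
    · -- t is strictly to the right of the column of u
      have e1 : yy (t.1 + 1, t.2) = xx (t.1 + 1, t.2) := by
        rw [hyydef]
        show xx (t.1 + 1, t.2) + G ((t.1 + 1, t.2) - u) = xx (t.1 + 1, t.2)
        rw [hGright (t.1 + 1) t.2 (by omega), add_zero]
      have e2 : yy (t.1, t.2) = xx (t.1, t.2) := by
        rw [hyydef]
        show xx (t.1, t.2) + G ((t.1, t.2) - u) = xx (t.1, t.2)
        rw [hGright t.1 t.2 hlt, add_zero]
      rw [f_apply_s19, f_apply_s19, e1, e2]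
  -- the two points of Y disagree at u
  have key := H u hu hextreme (f xx) ⟨xx, hxxL, rfl⟩ (f yy) ⟨yy, hyyL, rfl⟩ hagree u hu
  have hx0 : xx (A0 + 1, B0) = 0 := by
    rw [xcol]
    have : ¬ (B0 - B0) ∈ B := by
      intro hmem
      have := hBpos _ hmem
      omega
    rw [if_neg this]
  have hy0 : yy (A0 + 1, B0) = 0 := by
    rw [hyydef]
    show xx (A0 + 1, B0) + G ((A0 + 1, B0) - u) = 0
    rw [hx0, hGright (A0 + 1) B0 (by omega), add_zero]
  have hyu : yy (A0, B0) = xx (A0, B0) + 1 := by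
    rw [hyydef]
    show xx (A0, B0) + G ((A0, B0) - u) = xx (A0, B0) + 1
    rw [hudef]
    show xx (A0, B0) + G ((A0, B0) - (A0, B0)) = xx (A0, B0) + 1
    rw [Prod.mk_sub_mk, sub_self, sub_self, G_col0]
  have hkey1 : f xx u = (xx (A0, B0), 0) := by
    rw [hudef, f_apply_s19]
    show (if xx (A0 + 1, B0) = 0 then (xx (A0, B0), (0 : ZMod 2)) else (0, 1)) = _
    rw [hx0, if_pos rfl]
  have hkey2 : f yy u = (xx (A0, B0) + 1, 0) := by
    rw [hudef, f_apply_s19]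
    show (if yy (A0 + 1, B0) = 0 then (yy (A0, B0), (0 : ZMod 2)) else (0, 1)) = _
    rw [hy0, if_pos rfl, hyu]
  rw [hkey1, hkey2] at key
  have : xx (A0, B0) = xx (A0, B0) + 1 := congrArg Prod.fst key
  have h01 : (0 : ZMod 2) = 1 := by
    have h := this
    rw [left_eq_add] at h
    exact h.symm
  exact absurd h01.symm one_ne_zero
end
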